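/- Let X be an n×p real matrix with linearly independent columns, Y ∈ ℝⁿ, let C be a p×s real matrix (s < p) with linearly independent columns, and t ∈ ℝ^s. Let β̂ = (XᵀX)⁻¹XᵀY be the least squares estimator, let τ̂ = Cᵀβ̂ − t, and define β* = β̂ − (XᵀX)⁻¹ C (Cᵀ(XᵀX)⁻¹C)⁻¹ τ̂. Then Cᵀβ* = t, and for every β ∈ ℝ^p with Cᵀβ = t one has ‖Y − Xβ*‖² ≤ ‖Y − Xβ‖²; that is, β* minimizes the residual sum of squares R(β) = (Y − Xβ)ᵀ(Y − Xβ) subject to the restriction Cᵀβ − t = 0. -/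

import Mathlib

/-!
The restricted estimator satisfies the restricted normal equation
`Xᵀ(Y − Xβ*) = C λ` with Lagrange multiplier `λ = (Cᵀ(XᵀX)⁻¹C)⁻¹ τ̂`. For any `β` with
`Cᵀβ = Cᵀβ*` the residual then splits as `Y − Xβ = (Y − Xβ*) + X(β* − β)` with orthogonal
summands, since `(Y − Xβ*) ⬝ X(β* − β) = λ ⬝ Cᵀ(β* − β) = 0`; Pythagoras gives the inequality.
-/

open Matrix

section

variable {R : Type*} [CommRing R] [LinearOrder R] [IsStrictOrderedRing R]
  {m n k : Type*} [Fintype m] [Fintype n] [Fintype k]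

theorem dotProduct_residual_le_of_transpose_mulVec_eq {X : Matrix m n R} {C : Matrix n k R}
    {Y : m → R} {b₀ b : n → R} {μ : k → R} (hnormal : Xᵀ *ᵥ (Y - X *ᵥ b₀) = C *ᵥ μ)
    (hb : Cᵀ *ᵥ b = Cᵀ *ᵥ b₀) :
    (Y - X *ᵥ b₀) ⬝ᵥ (Y - X *ᵥ b₀) ≤ (Y - X *ᵥ b) ⬝ᵥ (Y - X *ᵥ b) := by
  set r := Y - X *ᵥ b₀
  set w := X *ᵥ (b₀ - b)
  have hCd : Cᵀ *ᵥ (b₀ - b) = 0 := by rw [mulVec_sub, hb, sub_self]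
  have horth : r ⬝ᵥ w = 0 := by
    rw [dotProduct_mulVec, ← mulVec_transpose, hnormal, dotProduct_comm, dotProduct_mulVec,
      ← mulVec_transpose, hCd, zero_dotProduct]
  have hsplit : Y - X *ᵥ b = r + w := by simp only [r, w, mulVec_sub]; abel
  have hw : 0 ≤ w ⬝ᵥ w := Finset.sum_nonneg fun i _ => mul_self_nonneg (w i)
  rw [hsplit, add_dotProduct, dotProduct_add, dotProduct_add, horth, dotProduct_comm w r, horth]
  linarith

end

section

variable {R : Type*} [CommRing R] {m n k : Type*} [Fintype m] [Fintype n] [Fintype k]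
  [DecidableEq n] [DecidableEq k]

noncomputable def restrictedEstimator (A : Matrix n n R) (C : Matrix n k R) (b : n → R)
    (t : k → R) : n → R :=
  b - (A⁻¹ * C * (Cᵀ * A⁻¹ * C)⁻¹) *ᵥ (Cᵀ *ᵥ b - t)

theorem transpose_mulVec_restrictedEstimator {A : Matrix n n R} {C : Matrix n k R}
    (hM : IsUnit (Cᵀ * A⁻¹ * C).det) (b : n → R) (t : k → R) :
    Cᵀ *ᵥ restrictedEstimator A C b t = t := by
  rw [restrictedEstimator, mulVec_sub, mulVec_mulVec, ← Matrix.mul_assoc, ← Matrix.mul_assoc,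
    mul_nonsing_inv _ hM, one_mulVec, sub_sub_cancel]

theorem transpose_mulVec_sub_mulVec_leastSquares {X : Matrix m n R} (hA : IsUnit (Xᵀ * X).det)
    (Y : m → R) : Xᵀ *ᵥ (Y - X *ᵥ (((Xᵀ * X)⁻¹ * Xᵀ) *ᵥ Y)) = 0 := by
  rw [mulVec_sub, mulVec_mulVec, mulVec_mulVec, ← Matrix.mul_assoc, mul_nonsing_inv _ hA,
    Matrix.one_mul, sub_self]

theorem transpose_mulVec_sub_mulVec_restrictedEstimator {X : Matrix m n R} {C : Matrix n k R}
    (hA : IsUnit (Xᵀ * X).det) (Y : m → R) (b : n → R) (t : k → R) :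
    Xᵀ *ᵥ (Y - X *ᵥ restrictedEstimator (Xᵀ * X) C b t) =
      Xᵀ *ᵥ (Y - X *ᵥ b) + C *ᵥ ((Cᵀ * (Xᵀ * X)⁻¹ * C)⁻¹ *ᵥ (Cᵀ *ᵥ b - t)) := by
  have hXd : Xᵀ *ᵥ (X *ᵥ (((Xᵀ * X)⁻¹ * C * (Cᵀ * (Xᵀ * X)⁻¹ * C)⁻¹) *ᵥ (Cᵀ *ᵥ b - t))) =
      C *ᵥ ((Cᵀ * (Xᵀ * X)⁻¹ * C)⁻¹ *ᵥ (Cᵀ *ᵥ b - t)) := by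
    simp only [mulVec_mulVec, ← Matrix.mul_assoc]
    rw [mul_nonsing_inv _ hA, Matrix.one_mul]
  rw [restrictedEstimator, mulVec_sub X, sub_sub_eq_add_sub, add_sub_right_comm, mulVec_add, hXd]

end

theorem stmt2_general (n p s : ℕ)
    (X : Matrix (Fin n) (Fin p) ℝ)
    (hX : LinearIndependent ℝ (fun j : Fin p => Xᵀ j))
    (Y : Fin n → ℝ)
    (C : Matrix (Fin p) (Fin s) ℝ)
    (hC : LinearIndependent ℝ (fun j : Fin s => Cᵀ j))
    (t : Fin s → ℝ)
    (βhat : Fin p → ℝ) (hβhat : βhat = ((Xᵀ * X)⁻¹ * Xᵀ) *ᵥ Y)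
    (τhat : Fin s → ℝ) (hτhat : τhat = Cᵀ *ᵥ βhat - t)
    (βstar : Fin p → ℝ)
    (hβstar : βstar = βhat - ((Xᵀ * X)⁻¹ * C * (Cᵀ * (Xᵀ * X)⁻¹ * C)⁻¹) *ᵥ τhat) :
    Cᵀ *ᵥ βstar = t ∧
      ∀ β : Fin p → ℝ, Cᵀ *ᵥ β = t →
        (Y - X *ᵥ βstar) ⬝ᵥ (Y - X *ᵥ βstar) ≤ (Y - X *ᵥ β) ⬝ᵥ (Y - X *ᵥ β) := by
  have hA : (Xᵀ * X).PosDef := by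
    simpa using PosDef.conjTranspose_mul_self X (mulVec_injective_iff.mpr hX)
  have hM : (Cᵀ * (Xᵀ * X)⁻¹ * C).PosDef := by
    simpa using hA.inv.conjTranspose_mul_mul_same (mulVec_injective_iff.mpr hC)
  have hAdet := (isUnit_iff_isUnit_det _).mp hA.isUnit
  have hMdet := (isUnit_iff_isUnit_det _).mp hM.isUnit
  obtain rfl : βstar = restrictedEstimator (Xᵀ * X) C βhat t := by rw [hβstar, hτhat]; rfl
  refine ⟨transpose_mulVec_restrictedEstimator hMdet βhat t, fun β hβ => ?_⟩
  refine dotProduct_residual_le_of_transpose_mulVec_eq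
    (μ := (Cᵀ * (Xᵀ * X)⁻¹ * C)⁻¹ *ᵥ (Cᵀ *ᵥ βhat - t)) ?_
    (hβ.trans (transpose_mulVec_restrictedEstimator hMdet βhat t).symm)
  rw [transpose_mulVec_sub_mulVec_restrictedEstimator hAdet, hβhat,
    transpose_mulVec_sub_mulVec_leastSquares hAdet, zero_add]

/-- The restricted least squares estimator
`β* = β̂ − (XᵀX)⁻¹ C (Cᵀ(XᵀX)⁻¹C)⁻¹ τ̂` (with `τ̂ = Cᵀβ̂ − t`) satisfies the
restriction `Cᵀβ* = t` and minimizes the residual sum of squares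
`R(β) = (Y − Xβ)ᵀ(Y − Xβ)` over all `β` with `Cᵀβ = t`. -/
theorem stmt2 (n p s : ℕ) (hs : 0 < s) (hsp : s < p)
    (X : Matrix (Fin n) (Fin p) ℝ)
    (hX : LinearIndependent ℝ (fun j : Fin p => Xᵀ j))
    (Y : Fin n → ℝ)
    (C : Matrix (Fin p) (Fin s) ℝ)
    (hC : LinearIndependent ℝ (fun j : Fin s => Cᵀ j))
    (t : Fin s → ℝ)
    (βhat : Fin p → ℝ) (hβhat : βhat = ((Xᵀ * X)⁻¹ * Xᵀ) *ᵥ Y)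
    (τhat : Fin s → ℝ) (hτhat : τhat = Cᵀ *ᵥ βhat - t)
    (βstar : Fin p → ℝ)
    (hβstar : βstar = βhat - ((Xᵀ * X)⁻¹ * C * (Cᵀ * (Xᵀ * X)⁻¹ * C)⁻¹) *ᵥ τhat) :
    Cᵀ *ᵥ βstar = t ∧
      ∀ β : Fin p → ℝ, Cᵀ *ᵥ β = t →
        (Y - X *ᵥ βstar) ⬝ᵥ (Y - X *ᵥ βstar) ≤ (Y - X *ᵥ β) ⬝ᵥ (Y - X *ᵥ β) :=
  stmt2_general n p s X hX Y C hC t βhat hβhat τhat hτhat βstar hβstar
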